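/- arXiv:2407.05911 — 2 statements merged into one kernel-verified Lean document; each statement's English description precedes it below -/
import Mathlib

section
/- Let D be a dyadic lattice in ℝ^d with exactly one quadrant, let f ∈ L^1_loc(ℝ^d) have compact support, and let α ∈ [0, d). Then there is a 1/2-sparse family of cubes S = S(f) ⊆ D such that M^D_α f(x) ≤ 2^{1−α/d} · Σ_{Q∈S} χ_Q(x) |Q|^{α/d} ⨍_Q |f| for almost every x ∈ ℝ^d. -/
open MeasureTheory ENNReal NNReal Set

noncomputable section

/-- A half-open axis-parallel cube in `ℝ^d`, given by its corner and (positive) sidelength. -/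
structure Cube (d : ℕ) where
  corner : Fin d → ℝ
  side : ℝ
  side_pos : 0 < side

namespace Cube

variable {d : ℕ}

/-- The set of points of the cube: `[x_1, x_1+l) × ⋯ × [x_d, x_d+l)`. -/
def toSet (Q : Cube d) : Set (Fin d → ℝ) :=
  {y | ∀ i, Q.corner i ≤ y i ∧ y i < Q.corner i + Q.side}

/-- The translate `Q + l(Q) m` of a cube. -/
def translate (Q : Cube d) (m : Fin d → ℤ) : Cube d :=
  ⟨fun i => Q.corner i + Q.side * (m i : ℝ), Q.side, Q.side_pos⟩

/-- The corner child `x(Q) + (1/2)(Q - x(Q))` of a cube. -/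
def cornerChild (Q : Cube d) : Cube d :=
  ⟨Q.corner, Q.side / 2, by have := Q.side_pos; linarith⟩

/-- The threefold expansion `x(Q) + 3(Q - x(Q))` of a cube from its corner. -/
def expand3 (Q : Cube d) : Cube d :=
  ⟨Q.corner, 3 * Q.side, by have := Q.side_pos; linarith⟩

/-- The dilate `D_c Q`: cube with the same center as `Q` and sidelength `c·l(Q)`. -/
def dilate (Q : Cube d) (c : ℝ) (hc : 0 < c) : Cube d :=
  ⟨fun i => Q.corner i + Q.side / 2 - c * Q.side / 2, c * Q.side, by
    have := Q.side_pos; positivity⟩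

end Cube

/-- A dyadic lattice in `ℝ^d`: a family of generations of cubes, each generation formed by
all translates of one of its cubes, and each generation containing a cube whose corner child
belongs to the next generation. -/
structure DyadicLattice (d : ℕ) where
  gen : ℤ → Set (Cube d)
  gen_translates : ∀ k, ∃ Q ∈ gen k, gen k = {R | ∃ m : Fin d → ℤ, R = Q.translate m}
  cornerChild_mem : ∀ k, ∃ Q ∈ gen k, Q.cornerChild ∈ gen (k + 1)

/-- The collection of all cubes of a dyadic lattice. -/
def DyadicLattice.cubes {d : ℕ} (D : DyadicLattice d) : Set (Cube d) := ⋃ k, D.gen k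

/-- The quadrant of a dyadic lattice containing `x`: the union of all cubes of the lattice
containing `x`. -/
def DyadicLattice.quadrant {d : ℕ} (D : DyadicLattice d) (x : Fin d → ℝ) :
    Set (Fin d → ℝ) :=
  ⋃ Q ∈ {Q : Cube d | Q ∈ D.cubes ∧ x ∈ Q.toSet}, Q.toSet

/-- A weight: a locally integrable, a.e. positive (and finite) function. -/
def IsWeight {d : ℕ} (w : (Fin d → ℝ) → ℝ) : Prop :=
  LocallyIntegrable w volume ∧ ∀ᵐ x ∂(volume : Measure (Fin d → ℝ)), 0 < w x

/-- The measure `w dx` associated to a weight. -/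
def wMeasure {d : ℕ} (w : (Fin d → ℝ) → ℝ) : Measure (Fin d → ℝ) :=
  volume.withDensity fun x => ENNReal.ofReal (w x)

/-- `w(E) = ∫_E w dx`. -/
def wInt {d : ℕ} (w : (Fin d → ℝ) → ℝ) (E : Set (Fin d → ℝ)) : ℝ≥0∞ :=
  ∫⁻ x in E, ENNReal.ofReal (w x)

/-- The `L^q` norm (with `q = ∞` allowed) of an `ℝ≥0∞`-valued function. -/
def eLpNormENN {X : Type*} [MeasurableSpace X] (g : X → ℝ≥0∞) (q : ℝ≥0∞)
    (μ : Measure X) : ℝ≥0∞ :=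
  if q = ∞ then essSup g μ
  else (∫⁻ x, g x ^ q.toReal ∂μ) ^ (1 / q.toReal)

/-- The weak `L^q` quasinorm (with `q = ∞` allowed, interpreted as the `L^∞` norm) of an
`ℝ≥0∞`-valued function: `sup_{t>0} t · μ{g > t}^{1/q}`. -/
def wnormENN {X : Type*} [MeasurableSpace X] (g : X → ℝ≥0∞) (q : ℝ≥0∞)
    (μ : Measure X) : ℝ≥0∞ :=
  if q = ∞ then essSup g μ
  else ⨆ t : ℝ≥0, (t : ℝ≥0∞) * μ {x | (t : ℝ≥0∞) < g x} ^ (1 / q.toReal)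

/-- The weighted dyadic fractional maximal operator
`M^D_{α,w} f(x) = sup_{Q ∈ D, x ∈ Q} w(Q)^{α/d-1} ∫_Q |f| w`. -/
def MwDyadic {d : ℕ} (D : DyadicLattice d) (α : ℝ) (w f : (Fin d → ℝ) → ℝ)
    (x : Fin d → ℝ) : ℝ≥0∞ :=
  ⨆ (Q : Cube d) (_ : Q ∈ D.cubes) (_ : x ∈ Q.toSet),
    wInt w Q.toSet ^ (α / (d : ℝ) - 1) *
      ∫⁻ y in Q.toSet, (‖f y‖₊ : ℝ≥0∞) * ENNReal.ofReal (w y)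

/-- The dyadic fractional maximal operator `M^D_α f(x) = sup_{Q ∈ D, x ∈ Q} |Q|^{α/d} ⨍_Q |f|`. -/
def MfracDyadic {d : ℕ} (D : DyadicLattice d) (α : ℝ) (f : (Fin d → ℝ) → ℝ)
    (x : Fin d → ℝ) : ℝ≥0∞ :=
  ⨆ (Q : Cube d) (_ : Q ∈ D.cubes) (_ : x ∈ Q.toSet),
    volume Q.toSet ^ (α / (d : ℝ) - 1) * ∫⁻ y in Q.toSet, (‖f y‖₊ : ℝ≥0∞)

/-- The fractional maximal operator `M_α f(x) = sup_{Q ∋ x} |Q|^{α/d} ⨍_Q |f|`,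
supremum over all cubes containing `x`. -/
def Mfrac {d : ℕ} (α : ℝ) (f : (Fin d → ℝ) → ℝ) (x : Fin d → ℝ) : ℝ≥0∞ :=
  ⨆ (Q : Cube d) (_ : x ∈ Q.toSet),
    volume Q.toSet ^ (α / (d : ℝ) - 1) * ∫⁻ y in Q.toSet, (‖f y‖₊ : ℝ≥0∞)

/-- The weighted fractional maximal operator
`M_{α,w} f(x) = sup_{Q ∋ x} w(Q)^{α/d-1} ∫_Q |f| w`, supremum over all cubes containing `x`. -/
def Mwfrac {d : ℕ} (α : ℝ) (w f : (Fin d → ℝ) → ℝ) (x : Fin d → ℝ) : ℝ≥0∞ :=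
  ⨆ (Q : Cube d) (_ : x ∈ Q.toSet),
    wInt w Q.toSet ^ (α / (d : ℝ) - 1) *
      ∫⁻ y in Q.toSet, (‖f y‖₊ : ℝ≥0∞) * ENNReal.ofReal (w y)

/-- An `η`-sparse collection of cubes: each cube `Q` has a measurable subset `G(Q)` with
`|G(Q)| ≥ η|Q|`, the sets `G(Q)` being pairwise disjoint. -/
def IsSparseCubes {d : ℕ} (η : ℝ) (S : Set (Cube d)) : Prop :=
  ∃ G : Cube d → Set (Fin d → ℝ),
    (∀ Q ∈ S, G Q ⊆ Q.toSet ∧ MeasurableSet (G Q) ∧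
      ENNReal.ofReal η * volume Q.toSet ≤ volume (G Q)) ∧
    S.PairwiseDisjoint G

/-- The sparse operator `A_S^α f(x) = Σ_{Q ∈ S} χ_Q(x) |Q|^{α/d} ⨍_Q |f|`. -/
def sparseOp {d : ℕ} (α : ℝ) (S : Set (Cube d)) (f : (Fin d → ℝ) → ℝ)
    (x : Fin d → ℝ) : ℝ≥0∞ :=
  ∑' Q : S, (Q : Cube d).toSet.indicator
    (fun _ => volume (Q : Cube d).toSet ^ (α / (d : ℝ) - 1) *
      ∫⁻ y in (Q : Cube d).toSet, (‖f y‖₊ : ℝ≥0∞)) x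

/-- The `A_{p,q}^α` constant of a pair of weights:
`[v,w] = sup_Q |Q|^{α/d-1} (∫_Q v^{-p'/p})^{1/p'} (∫_Q w)^{1/q}` where `p' = p/(p-1)`. -/
def apqConst {d : ℕ} (p q α : ℝ) (v w : (Fin d → ℝ) → ℝ) : ℝ≥0∞ :=
  ⨆ Q : Cube d,
    volume Q.toSet ^ (α / (d : ℝ) - 1) *
      (∫⁻ x in Q.toSet, ENNReal.ofReal (v x ^ (-(p / (p - 1)) / p))) ^ ((p - 1) / p) *
      (∫⁻ x in Q.toSet, ENNReal.ofReal (w x)) ^ (1 / q)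

/-- The Muckenhoupt `A_∞` condition: `sup_Q exp(⨍_Q log w⁻¹) · ⨍_Q w < ∞`. -/
def IsAinfty {d : ℕ} (w : (Fin d → ℝ) → ℝ) : Prop :=
  ∃ C : ℝ, ∀ Q : Cube d,
    Real.exp (⨍ x in Q.toSet, Real.log (w x)⁻¹ ∂volume) *
      (⨍ x in Q.toSet, w x ∂volume) ≤ C

/-- The Euclidean norm of a point of `ℝ^d`. -/
def euclNorm {d : ℕ} (x : Fin d → ℝ) : ℝ := Real.sqrt (∑ i, x i ^ 2)

/-- The auxiliary maximal operator `M_{T,λ}` controlling oscillations of truncations of `T`: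
`M_{T,λ} f(x) = sup_{Q ∋ x} ess sup_{x',x'' ∈ Q} |T(fχ_{ℝ^d∖Q*})(x') − T(fχ_{ℝ^d∖Q*})(x'')|`. -/
def MT {d : ℕ} (T : ((Fin d → ℝ) → ℝ) → (Fin d → ℝ) → ℝ) (lam : ℝ) (hlam : 0 < lam)
    (f : (Fin d → ℝ) → ℝ) (x : Fin d → ℝ) : ℝ≥0∞ :=
  ⨆ (Q : Cube d) (_ : x ∈ Q.toSet),
    essSup
      (fun z : (Fin d → ℝ) × (Fin d → ℝ) =>
        (‖T (((Q.dilate lam hlam).toSet)ᶜ.indicator f) z.1 -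
            T (((Q.dilate lam hlam).toSet)ᶜ.indicator f) z.2‖₊ : ℝ≥0∞))
      ((volume.restrict Q.toSet).prod (volume.restrict Q.toSet))

end

/-!
Choose a cube `T` of the lattice containing the support of `f`, which exists because the lattice
has one quadrant, and run a Calderón–Zygmund stopping time below `T`: the children of a stopping
cube `Q` are the maximal lattice cubes `R ⊊ Q` with
`|R|^{α/d} ⨍_R |f| > 2^{1-α/d} |Q|^{α/d} ⨍_Q |f|`. Since `|R| ≤ 2^{-d} |Q|`, comparing `|R|^{1-α/d}`
with `∫_R |f|` shows that the children cover at most half of `Q`. The family `S` consists of the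
stopping cubes and the ancestors of `T`, and `G(Q)` is `Q` minus the smaller cubes of `S`; these lie
in the children of `Q`, or, for an ancestor of `T`, in its child containing `T`. A lattice cube
inside `T` is controlled by the smallest stopping cube containing it, a cube strictly containing `T`
belongs to `S`, and a cube missing the support of `f` contributes nothing.
-/

namespace Cube

variable {d : ℕ}

lemma toSet_eq_pi (Q : Cube d) :
    Q.toSet = univ.pi fun i => Ico (Q.corner i) (Q.corner i + Q.side) := by
  ext y
  simp [toSet]

lemma measurableSet_toSet (Q : Cube d) : MeasurableSet Q.toSet := by
  rw [toSet_eq_pi]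
  exact .univ_pi fun _ => measurableSet_Ico

lemma corner_mem_toSet (Q : Cube d) : Q.corner ∈ Q.toSet :=
  fun _ => ⟨le_rfl, lt_add_of_pos_right _ Q.side_pos⟩

lemma volume_toSet (Q : Cube d) : volume Q.toSet = ENNReal.ofReal (Q.side ^ d) := by
  simp [toSet_eq_pi, volume_pi_pi, Real.volume_Ico, ENNReal.ofReal_pow Q.side_pos.le]

lemma volume_toSet_ne_zero (Q : Cube d) : volume Q.toSet ≠ 0 := by
  simpa [volume_toSet] using pow_pos Q.side_pos d

lemma volume_toSet_ne_top (Q : Cube d) : volume Q.toSet ≠ ∞ := by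
  simp [volume_toSet]

lemma volume_rpow_mul_volume_rpow_one_sub (Q : Cube d) (s : ℝ) :
    volume Q.toSet ^ s * volume Q.toSet ^ (1 - s) = volume Q.toSet := by
  rw [← ENNReal.rpow_add _ _ Q.volume_toSet_ne_zero Q.volume_toSet_ne_top, add_sub_cancel,
    ENNReal.rpow_one]

lemma toSet_subset_iff {Q R : Cube d} :
    R.toSet ⊆ Q.toSet ↔
      ∀ i, Q.corner i ≤ R.corner i ∧ R.corner i + R.side ≤ Q.corner i + Q.side := by
  rw [toSet_eq_pi Q, toSet_eq_pi R, pi_subset_pi_iff, or_iff_left]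
  · simp only [mem_univ, forall_const, Ico_subset_Ico_iff (lt_add_of_pos_right _ R.side_pos)]
  · rw [← toSet_eq_pi]
    exact (nonempty_of_mem R.corner_mem_toSet).ne_empty

lemma side_le_of_toSet_subset (hd : 0 < d) {Q R : Cube d} (h : R.toSet ⊆ Q.toSet) :
    R.side ≤ Q.side := by
  obtain ⟨h₁, h₂⟩ := toSet_subset_iff.1 h ⟨0, hd⟩
  linarith

lemma toSet_injective (hd : 0 < d) : Function.Injective (toSet : Cube d → Set (Fin d → ℝ)) := by
  rintro ⟨c, s, hs⟩ ⟨c', s', hs'⟩ h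
  have hside : s = s' :=
    le_antisymm (side_le_of_toSet_subset hd h.le) (side_le_of_toSet_subset hd h.ge)
  have hcorner : c = c' :=
    funext fun i => le_antisymm (toSet_subset_iff.1 h.ge i).1 (toSet_subset_iff.1 h.le i).1
  subst hside hcorner
  rfl

lemma mem_translate_toSet_iff {Q : Cube d} {m : Fin d → ℤ} {y : Fin d → ℝ} :
    y ∈ (Q.translate m).toSet ↔
      ∀ i, y i - m i • Q.side ∈ Ico (Q.corner i) (Q.corner i + Q.side) := by
  simp only [translate, toSet, mem_Ico, zsmul_eq_mul]
  refine forall_congr' fun i => ?_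
  constructor <;> rintro ⟨h₁, h₂⟩ <;> constructor <;> linarith

lemma existsUnique_mem_translate_toSet (Q : Cube d) (y : Fin d → ℝ) :
    ∃! m : Fin d → ℤ, y ∈ (Q.translate m).toSet := by
  choose m hm hunique using
    fun i => existsUnique_sub_zsmul_mem_Ico Q.side_pos (y i) (Q.corner i)
  exact ⟨m, mem_translate_toSet_iff.2 hm,
    fun m' hm' => funext fun i => hunique i (m' i) (mem_translate_toSet_iff.1 hm' i)⟩

lemma translate_translate (Q : Cube d) (m m' : Fin d → ℤ) :
    (Q.translate m).translate m' = Q.translate (m + m') := by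
  simp only [translate, Pi.add_apply, Int.cast_add, mul_add, add_assoc]

/-- An interval of the grid `(s/2) ℤ` meeting an interval of the grid `s ℤ` lies inside it. -/
lemma half_grid_interval_subset {s : ℝ} (hs : 0 < s) {m m' : ℤ}
    (h₁ : s / 2 * m < s * m' + s) (h₂ : s * m' < s / 2 * m + s / 2) :
    s * m' ≤ s / 2 * m ∧ s / 2 * m + s / 2 ≤ s * m' + s := by
  have h₁' : (m : ℝ) < 2 * m' + 2 := by nlinarith
  have h₂' : 2 * (m' : ℝ) < m + 1 := by nlinarith
  have h₁'' : m < 2 * m' + 2 := by exact_mod_cast h₁'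
  have h₂'' : 2 * m' < m + 1 := by exact_mod_cast h₂'
  have hlo : 2 * (m' : ℝ) ≤ m := by exact_mod_cast (by omega : 2 * m' ≤ m)
  have hhi : (m : ℝ) ≤ 2 * m' + 1 := by exact_mod_cast (by omega : m ≤ 2 * m' + 1)
  constructor <;> nlinarith

end Cube

namespace DyadicLattice

variable {d : ℕ} (D : DyadicLattice d)

lemma gen_eq_translates {k : ℤ} {Q : Cube d} (hQ : Q ∈ D.gen k) :
    D.gen k = {R | ∃ m : Fin d → ℤ, R = Q.translate m} := by
  obtain ⟨B, -, hB⟩ := D.gen_translates k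
  obtain ⟨p, rfl⟩ : ∃ p, Q = B.translate p := by rwa [hB] at hQ
  rw [hB]
  ext R
  constructor
  · rintro ⟨m, rfl⟩
    exact ⟨m - p, by rw [Cube.translate_translate, add_sub_cancel]⟩
  · rintro ⟨m, rfl⟩
    exact ⟨p + m, Cube.translate_translate B p m⟩

lemma existsUnique_mem_gen (k : ℤ) (y : Fin d → ℝ) : ∃! Q, Q ∈ D.gen k ∧ y ∈ Q.toSet := by
  obtain ⟨B, -, hB⟩ := D.gen_translates k
  obtain ⟨m, hm, hunique⟩ := B.existsUnique_mem_translate_toSet y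
  refine ⟨B.translate m, ⟨hB ▸ ⟨m, rfl⟩, hm⟩, ?_⟩
  rintro R ⟨hR, hyR⟩
  obtain ⟨m', rfl⟩ : ∃ m', R = B.translate m' := by rwa [hB] at hR
  rw [hunique m' hyR]

noncomputable def cubeAt (k : ℤ) (y : Fin d → ℝ) : Cube d :=
  (D.existsUnique_mem_gen k y).exists.choose

lemma cubeAt_mem_gen (k : ℤ) (y : Fin d → ℝ) : D.cubeAt k y ∈ D.gen k :=
  (D.existsUnique_mem_gen k y).exists.choose_spec.1

lemma mem_cubeAt (k : ℤ) (y : Fin d → ℝ) : y ∈ (D.cubeAt k y).toSet :=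
  (D.existsUnique_mem_gen k y).exists.choose_spec.2

lemma eq_cubeAt {k : ℤ} {y : Fin d → ℝ} {Q : Cube d} (hQ : Q ∈ D.gen k) (hy : y ∈ Q.toSet) :
    Q = D.cubeAt k y :=
  (D.existsUnique_mem_gen k y).unique ⟨hQ, hy⟩ ⟨D.cubeAt_mem_gen k y, D.mem_cubeAt k y⟩

lemma cubeAt_mem_cubes (k : ℤ) (y : Fin d → ℝ) : D.cubeAt k y ∈ D.cubes :=
  mem_iUnion.2 ⟨k, D.cubeAt_mem_gen k y⟩

noncomputable def genSide (k : ℤ) : ℝ := (D.gen_translates k).choose.side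

lemma side_eq_genSide {k : ℤ} {Q : Cube d} (hQ : Q ∈ D.gen k) : Q.side = D.genSide k := by
  obtain ⟨m, hm⟩ : ∃ m, (D.gen_translates k).choose = Q.translate m := by
    simpa [D.gen_eq_translates hQ] using (D.gen_translates k).choose_spec.1
  rw [genSide, hm]
  rfl

lemma genSide_succ (k : ℤ) : D.genSide (k + 1) = D.genSide k / 2 := by
  obtain ⟨Q, hQ, hQ'⟩ := D.cornerChild_mem k
  rw [← D.side_eq_genSide hQ, ← D.side_eq_genSide hQ']
  rfl

lemma genSide_strictAnti : StrictAnti D.genSide := by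
  refine strictAnti_int_of_succ_lt fun k => ?_
  rw [genSide_succ]
  exact half_lt_self (D.gen_translates k).choose.side_pos

lemma toSet_subset_of_mem_gen_succ {k : ℤ} {Q R : Cube d} (hQ : Q ∈ D.gen k)
    (hR : R ∈ D.gen (k + 1)) (hQR : (R.toSet ∩ Q.toSet).Nonempty) : R.toSet ⊆ Q.toSet := by
  obtain ⟨B, hB, hB'⟩ := D.cornerChild_mem k
  obtain ⟨m', rfl⟩ : ∃ m', Q = B.translate m' := by rwa [D.gen_eq_translates hB] at hQ
  obtain ⟨m, rfl⟩ : ∃ m, R = B.cornerChild.translate m := by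
    rwa [D.gen_eq_translates hB'] at hR
  obtain ⟨z, hzR, hzQ⟩ := hQR
  refine Cube.toSet_subset_iff.2 fun i => ?_
  have hzRi := hzR i
  have hzQi := hzQ i
  simp only [Cube.translate, Cube.cornerChild] at hzRi hzQi ⊢
  obtain ⟨h₁, h₂⟩ := Cube.half_grid_interval_subset B.side_pos (m := m i) (m' := m' i)
    (by linarith) (by linarith)
  constructor <;> linarith

lemma cubeAt_antitone (y : Fin d → ℝ) : Antitone fun k => (D.cubeAt k y).toSet :=
  antitone_int_of_succ_le fun k => D.toSet_subset_of_mem_gen_succ (D.cubeAt_mem_gen k y)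
    (D.cubeAt_mem_gen (k + 1) y) ⟨y, D.mem_cubeAt _ y, D.mem_cubeAt _ y⟩

lemma toSet_subset_of_le {k j : ℤ} {Q R : Cube d} (hQ : Q ∈ D.gen k) (hR : R ∈ D.gen j)
    (hkj : k ≤ j) (hQR : (R.toSet ∩ Q.toSet).Nonempty) : R.toSet ⊆ Q.toSet := by
  obtain ⟨z, hzR, hzQ⟩ := hQR
  rw [D.eq_cubeAt hR hzR, D.eq_cubeAt hQ hzQ]
  exact D.cubeAt_antitone z hkj

open Classical in
noncomputable def level (Q : Cube d) : ℤ :=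
  if h : Q ∈ D.cubes then (mem_iUnion.1 h).choose else 0

lemma mem_gen_level {Q : Cube d} (hQ : Q ∈ D.cubes) : Q ∈ D.gen (D.level Q) := by
  rw [level, dif_pos hQ]
  exact (mem_iUnion.1 hQ).choose_spec

lemma level_eq {k : ℤ} {Q : Cube d} (hQ : Q ∈ D.gen k) : D.level Q = k :=
  D.genSide_strictAnti.injective <| by
    rw [← D.side_eq_genSide hQ, ← D.side_eq_genSide (D.mem_gen_level (mem_iUnion.2 ⟨k, hQ⟩))]

lemma level_cubeAt (k : ℤ) (y : Fin d → ℝ) : D.level (D.cubeAt k y) = k :=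
  D.level_eq (D.cubeAt_mem_gen k y)

lemma eq_cubeAt_level {Q : Cube d} (hQ : Q ∈ D.cubes) {y : Fin d → ℝ} (hy : y ∈ Q.toSet) :
    Q = D.cubeAt (D.level Q) y :=
  D.eq_cubeAt (D.mem_gen_level hQ) hy

lemma toSet_subset_of_level_le {Q R : Cube d} (hQ : Q ∈ D.cubes) (hR : R ∈ D.cubes)
    (h : D.level Q ≤ D.level R) (hQR : (R.toSet ∩ Q.toSet).Nonempty) : R.toSet ⊆ Q.toSet :=
  D.toSet_subset_of_le (D.mem_gen_level hQ) (D.mem_gen_level hR) h hQR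

lemma toSet_subset_or_subset {Q R : Cube d} (hQ : Q ∈ D.cubes) (hR : R ∈ D.cubes)
    (hQR : (R.toSet ∩ Q.toSet).Nonempty) : R.toSet ⊆ Q.toSet ∨ Q.toSet ⊆ R.toSet :=
  (le_total (D.level Q) (D.level R)).imp (fun h => D.toSet_subset_of_level_le hQ hR h hQR)
    fun h => D.toSet_subset_of_level_le hR hQ h (inter_comm R.toSet Q.toSet ▸ hQR)

lemma level_lt_of_ssubset {Q R : Cube d} (hQ : Q ∈ D.cubes) (hR : R ∈ D.cubes)
    (h : R.toSet ⊂ Q.toSet) : D.level Q < D.level R :=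
  lt_of_not_ge fun hle => h.2 <|
    D.toSet_subset_of_level_le hR hQ hle ⟨R.corner, h.1 R.corner_mem_toSet, R.corner_mem_toSet⟩

lemma level_le_of_subset (hd : 0 < d) {Q R : Cube d} (hQ : Q ∈ D.cubes) (hR : R ∈ D.cubes)
    (h : R.toSet ⊆ Q.toSet) : D.level Q ≤ D.level R := by
  have := Cube.side_le_of_toSet_subset hd h
  rw [D.side_eq_genSide (D.mem_gen_level hQ), D.side_eq_genSide (D.mem_gen_level hR)] at this
  exact D.genSide_strictAnti.le_iff_ge.1 this

lemma volume_le_of_level_lt {Q R : Cube d} (hQ : Q ∈ D.cubes) (hR : R ∈ D.cubes)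
    (h : D.level Q < D.level R) :
    volume R.toSet ≤ ENNReal.ofReal ((2 ^ d)⁻¹) * volume Q.toSet := by
  have hside : R.side ≤ Q.side / 2 := by
    rw [D.side_eq_genSide (D.mem_gen_level hQ), D.side_eq_genSide (D.mem_gen_level hR),
      ← genSide_succ]
    exact D.genSide_strictAnti.antitone h
  rw [Cube.volume_toSet, Cube.volume_toSet, ← ENNReal.ofReal_mul (by positivity)]
  refine ENNReal.ofReal_le_ofReal ?_
  calc R.side ^ d ≤ (Q.side / 2) ^ d := pow_le_pow_left₀ R.side_pos.le hside d
    _ = (2 ^ d)⁻¹ * Q.side ^ d := by rw [div_pow, div_eq_inv_mul]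

lemma volume_rpow_le_of_level_lt (hd : 0 < d) {α : ℝ} (hα : 0 ≤ α) {Q R : Cube d}
    (hQ : Q ∈ D.cubes) (hR : R ∈ D.cubes) (h : D.level Q < D.level R) :
    volume R.toSet ^ (α / d) ≤ ENNReal.ofReal (2 ^ (-α)) * volume Q.toSet ^ (α / d) := by
  have hexp : 0 ≤ α / d := by positivity
  calc volume R.toSet ^ (α / d)
      ≤ (ENNReal.ofReal ((2 ^ d)⁻¹) * volume Q.toSet) ^ (α / d) :=
        ENNReal.rpow_le_rpow (D.volume_le_of_level_lt hQ hR h) hexp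
    _ = ENNReal.ofReal (2 ^ (-α)) * volume Q.toSet ^ (α / d) := by
      rw [ENNReal.mul_rpow_of_nonneg _ _ hexp, ENNReal.ofReal_rpow_of_nonneg (by positivity) hexp,
        Real.inv_rpow (by positivity), ← Real.rpow_natCast, ← Real.rpow_mul zero_le_two,
        mul_div_cancel₀ _ (Nat.cast_ne_zero.2 hd.ne'), Real.rpow_neg zero_le_two]

lemma cubes_countable : D.cubes.Countable :=
  countable_iUnion fun k => by
    obtain ⟨B, -, hB⟩ := D.gen_translates k
    rw [hB]
    refine (countable_range B.translate).mono ?_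
    rintro R ⟨m, rfl⟩
    exact ⟨m, rfl⟩

/-- A compact set `K ⊆ [-r, r]^d` lies in the cube of the lattice containing the two corners
`(-r, …, -r)` and `(r + 1, …, r + 1)`, which exists because the lattice has one quadrant. -/
lemma exists_subset_cubeAt_of_isCompact (hD : ∀ x, D.quadrant x = univ)
    {K : Set (Fin d → ℝ)} (hK : IsCompact K) : ∃ a k, K ⊆ (D.cubeAt k a).toSet := by
  obtain ⟨r, hr⟩ := hK.isBounded.exists_norm_le
  have hb : (fun _ => r + 1 : Fin d → ℝ) ∈ D.quadrant (fun _ => -r) := by rw [hD]; trivial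
  obtain ⟨Q, ⟨hQ, ha⟩, hb⟩ := mem_iUnion₂.1 hb
  obtain ⟨k, hk⟩ := mem_iUnion.1 hQ
  refine ⟨fun _ => -r, k, fun y hy => D.eq_cubeAt hk ha ▸ fun i => ?_⟩
  have hyi : |y i| ≤ r := (norm_le_pi_norm y i).trans (hr y hy)
  have := ha i
  have := hb i
  constructor <;> linarith [abs_le.1 hyi]

lemma isSparseCubes_of_volume_biUnion_ssubset_le (hd : 0 < d) {η : ℝ} (hη₀ : 0 ≤ η)
    (hη₁ : η ≤ 1) {S : Set (Cube d)} (hS : S ⊆ D.cubes)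
    (h : ∀ Q ∈ S, volume (⋃ R ∈ {R ∈ S | R.toSet ⊂ Q.toSet}, R.toSet) ≤
      ENNReal.ofReal (1 - η) * volume Q.toSet) :
    IsSparseCubes η S := by
  set U : Cube d → Set (Fin d → ℝ) := fun Q => ⋃ R ∈ {R ∈ S | R.toSet ⊂ Q.toSet}, R.toSet
  refine ⟨fun Q => Q.toSet \ U Q, fun Q hQ => ⟨sdiff_subset, ?_, ?_⟩, ?_⟩
  · exact Q.measurableSet_toSet.diff <| .biUnion
      ((D.cubes_countable.mono hS).mono fun R hR => hR.1) fun R _ => R.measurableSet_toSet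
  · have hU : volume (U Q) ≠ ∞ :=
      ((h Q hQ).trans_lt (ENNReal.mul_lt_top ofReal_lt_top Q.volume_toSet_ne_top.lt_top)).ne
    refine (ENNReal.le_sub_of_add_le_left hU ?_).trans le_measure_sdiff
    calc volume (U Q) + ENNReal.ofReal η * volume Q.toSet
        ≤ ENNReal.ofReal (1 - η) * volume Q.toSet + ENNReal.ofReal η * volume Q.toSet := by
          gcongr
          exact h Q hQ
      _ = volume Q.toSet := by
          rw [← add_mul, ← ENNReal.ofReal_add (by linarith) hη₀, sub_add_cancel,
            ENNReal.ofReal_one, one_mul]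
  · intro Q hQ Q' hQ' hne
    refine disjoint_left.2 fun z ⟨hzQ, hzU⟩ ⟨hzQ', hzU'⟩ => ?_
    have hsets : Q.toSet ≠ Q'.toSet := (Cube.toSet_injective hd).ne hne
    rcases D.toSet_subset_or_subset (hS hQ') (hS hQ) ⟨z, hzQ, hzQ'⟩ with h | h
    · exact hzU' (mem_biUnion ⟨hQ, h.ssubset_of_ne hsets⟩ hzQ)
    · exact hzU (mem_biUnion ⟨hQ', h.ssubset_of_ne hsets.symm⟩ hzQ')

end DyadicLattice

noncomputable def fracAverage {d : ℕ} (α : ℝ) (f : (Fin d → ℝ) → ℝ) (Q : Cube d) : ℝ≥0∞ :=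
  volume Q.toSet ^ (α / (d : ℝ) - 1) * ∫⁻ y in Q.toSet, (‖f y‖₊ : ℝ≥0∞)

section FracAverage

variable {d : ℕ} {α : ℝ} {f : (Fin d → ℝ) → ℝ}

lemma volume_rpow_mul_fracAverage (Q : Cube d) :
    volume Q.toSet ^ (1 - α / d) * fracAverage α f Q = ∫⁻ y in Q.toSet, (‖f y‖₊ : ℝ≥0∞) := by
  rw [fracAverage, ← mul_assoc, ← ENNReal.rpow_add _ _ Q.volume_toSet_ne_zero
    Q.volume_toSet_ne_top, sub_add_sub_cancel', sub_self, ENNReal.rpow_zero, one_mul]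

lemma fracAverage_le_sparseOp {S : Set (Cube d)} {Q : Cube d} (hQ : Q ∈ S) {x : Fin d → ℝ}
    (hx : x ∈ Q.toSet) : fracAverage α f Q ≤ sparseOp α S f x := by
  refine le_trans ?_ (ENNReal.le_tsum (⟨Q, hQ⟩ : S))
  rw [indicator_of_mem hx]
  rfl

lemma inter_tsupport_nonempty_of_fracAverage_ne_zero {Q : Cube d} (h : fracAverage α f Q ≠ 0) :
    (Q.toSet ∩ tsupport f).Nonempty := by
  refine not_disjoint_iff_nonempty_inter.1 fun hdisj => h ?_
  rw [fracAverage, setLIntegral_congr_fun Q.measurableSet_toSet (g := fun _ => 0) fun y hy => ?_,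
    lintegral_zero, mul_zero]
  simp [image_eq_zero_of_notMem_tsupport (hdisj.notMem_of_mem_left hy)]

end FracAverage

noncomputable def sparseConst (d : ℕ) (α : ℝ) : ℝ≥0∞ := ENNReal.ofReal (2 ^ (1 - α / (d : ℝ)))

section SparseConst

variable {d : ℕ} {α : ℝ}

lemma one_le_sparseConst (hαd : α ≤ d) : 1 ≤ sparseConst d α := by
  rw [sparseConst, ENNReal.one_le_ofReal]
  exact Real.one_le_rpow one_le_two (sub_nonneg.2 (div_le_one_of_le₀ hαd d.cast_nonneg))

lemma sparseConst_ne_zero : sparseConst d α ≠ 0 := by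
  rw [sparseConst, ne_eq, ENNReal.ofReal_eq_zero, not_le]
  positivity

lemma sparseConst_ne_top : sparseConst d α ≠ ∞ := ENNReal.ofReal_ne_top

lemma ofReal_two_rpow_neg_le (hd : 0 < d) (hα : 0 ≤ α) :
    ENNReal.ofReal (2 ^ (-α)) ≤ sparseConst d α * ENNReal.ofReal (1 / 2) := by
  rw [sparseConst, ← ENNReal.ofReal_mul (by positivity)]
  refine ENNReal.ofReal_le_ofReal ?_
  have h : (2 : ℝ) ^ (1 - α / d) * (1 / 2) = 2 ^ (-(α / d)) := by
    rw [Real.rpow_sub two_pos, Real.rpow_one, Real.rpow_neg zero_le_two]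
    ring
  rw [h]
  exact Real.rpow_le_rpow_of_exponent_le one_le_two
    (neg_le_neg (div_le_self hα (Nat.one_le_cast.2 hd)))

end SparseConst

namespace DyadicLattice

section Stopping

variable {d : ℕ} {D : DyadicLattice d} {α : ℝ} {f : (Fin d → ℝ) → ℝ}

variable (D α f) in
def stoppingChildren (Q : Cube d) : Set (Cube d) :=
  {R | R ∈ D.cubes ∧ R.toSet ⊂ Q.toSet ∧
    sparseConst d α * fracAverage α f Q < fracAverage α f R ∧
    ∀ P ∈ D.cubes, R.toSet ⊆ P.toSet → P.toSet ⊂ Q.toSet →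
      sparseConst d α * fracAverage α f Q < fracAverage α f P → P = R}

lemma pairwiseDisjoint_stoppingChildren (Q : Cube d) :
    (D.stoppingChildren α f Q).PairwiseDisjoint Cube.toSet := by
  intro R hR R' hR' hne
  by_contra hmeet
  rw [Function.onFun, not_disjoint_iff_nonempty_inter] at hmeet
  rcases D.toSet_subset_or_subset hR'.1 hR.1 hmeet with h | h
  · exact hne (hR.2.2.2 R' hR'.1 h hR'.2.1 hR'.2.2.1).symm
  · exact hne (hR'.2.2.2 R hR.1 h hR.2.1 hR.2.2.1)

lemma fracAverage_ne_top_of_mem_stoppingChildren {Q R : Cube d}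
    (hR : R ∈ D.stoppingChildren α f Q) : fracAverage α f Q ≠ ∞ := by
  intro h
  have := hR.2.2.1
  rw [h, ENNReal.mul_top sparseConst_ne_zero] at this
  exact not_top_lt this

lemma fracAverage_ne_zero_of_mem_stoppingChildren {Q R : Cube d}
    (hR : R ∈ D.stoppingChildren α f Q) : fracAverage α f Q ≠ 0 := by
  intro h
  have hQ : ∫⁻ y in Q.toSet, (‖f y‖₊ : ℝ≥0∞) = 0 := by
    rw [← volume_rpow_mul_fracAverage, h, mul_zero]
  have hR0 : fracAverage α f R = 0 := by
    rw [fracAverage, nonpos_iff_eq_zero.1 ((lintegral_mono_set hR.2.1.1).trans_eq hQ), mul_zero]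
  have := hR.2.2.1
  rw [h, mul_zero, hR0] at this
  exact lt_irrefl 0 this

lemma sparseConst_mul_fracAverage_mul_volume_le (hd : 0 < d) (hα : 0 ≤ α) {Q R : Cube d}
    (hQ : Q ∈ D.cubes) (hR : R ∈ D.stoppingChildren α f Q) :
    sparseConst d α * fracAverage α f Q * volume R.toSet ≤
      ENNReal.ofReal (2 ^ (-α)) * volume Q.toSet ^ (α / d) *
        ∫⁻ y in R.toSet, (‖f y‖₊ : ℝ≥0∞) :=
  calc sparseConst d α * fracAverage α f Q * volume R.toSet
      = volume R.toSet ^ (α / d) *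
          (volume R.toSet ^ (1 - α / d) * (sparseConst d α * fracAverage α f Q)) := by
        rw [← mul_assoc, R.volume_rpow_mul_volume_rpow_one_sub, mul_comm]
    _ ≤ volume R.toSet ^ (α / d) * (volume R.toSet ^ (1 - α / d) * fracAverage α f R) := by
        gcongr
        exact hR.2.2.1.le
    _ ≤ ENNReal.ofReal (2 ^ (-α)) * volume Q.toSet ^ (α / d) *
          ∫⁻ y in R.toSet, (‖f y‖₊ : ℝ≥0∞) := by
        rw [volume_rpow_mul_fracAverage]
        gcongr ?_ * _
        exact D.volume_rpow_le_of_level_lt hd hα hQ hR.1 (D.level_lt_of_ssubset hQ hR.1 hR.2.1)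

lemma sparseConst_mul_volume_biUnion_stoppingChildren_le (hd : 0 < d) (hα : 0 ≤ α)
    {Q : Cube d} (hQ : Q ∈ D.cubes) :
    sparseConst d α * volume (⋃ R ∈ D.stoppingChildren α f Q, R.toSet) ≤
      ENNReal.ofReal (2 ^ (-α)) * volume Q.toSet := by
  set K := D.stoppingChildren α f Q
  rcases K.eq_empty_or_nonempty with hK | ⟨R₀, hR₀⟩
  · simp [hK]
  have hKc : K.Countable := D.cubes_countable.mono fun R hR => hR.1
  have hsum : sparseConst d α * volume (⋃ R ∈ K, R.toSet) * fracAverage α f Q ≤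
      ENNReal.ofReal (2 ^ (-α)) * volume Q.toSet * fracAverage α f Q :=
    calc sparseConst d α * volume (⋃ R ∈ K, R.toSet) * fracAverage α f Q
        = ∑' R : K, sparseConst d α * fracAverage α f Q * volume (R : Cube d).toSet := by
          rw [measure_biUnion hKc (pairwiseDisjoint_stoppingChildren Q)
            fun R _ => R.measurableSet_toSet, ENNReal.tsum_mul_left, mul_right_comm]
      _ ≤ ∑' R : K, ENNReal.ofReal (2 ^ (-α)) * volume Q.toSet ^ (α / d) *
            ∫⁻ y in (R : Cube d).toSet, (‖f y‖₊ : ℝ≥0∞) :=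
          ENNReal.tsum_le_tsum fun R => sparseConst_mul_fracAverage_mul_volume_le hd hα hQ R.2
      _ = ENNReal.ofReal (2 ^ (-α)) * volume Q.toSet ^ (α / d) *
            ∫⁻ y in ⋃ R ∈ K, R.toSet, (‖f y‖₊ : ℝ≥0∞) := by
          rw [ENNReal.tsum_mul_left, lintegral_biUnion hKc (fun R _ => R.measurableSet_toSet)
            (pairwiseDisjoint_stoppingChildren Q)]
      _ ≤ ENNReal.ofReal (2 ^ (-α)) * volume Q.toSet ^ (α / d) *
            ∫⁻ y in Q.toSet, (‖f y‖₊ : ℝ≥0∞) := by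
          gcongr
          exact iUnion₂_subset fun R hR => hR.2.1.1
      _ = ENNReal.ofReal (2 ^ (-α)) * volume Q.toSet * fracAverage α f Q := by
          rw [← volume_rpow_mul_fracAverage, mul_assoc, ← mul_assoc (_ ^ _),
            Q.volume_rpow_mul_volume_rpow_one_sub, mul_assoc]
  exact (ENNReal.mul_le_mul_iff_left (fracAverage_ne_zero_of_mem_stoppingChildren hR₀)
    (fracAverage_ne_top_of_mem_stoppingChildren hR₀)).1 hsum

lemma volume_biUnion_stoppingChildren_le (hd : 0 < d) (hα : 0 ≤ α) {Q : Cube d}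
    (hQ : Q ∈ D.cubes) :
    volume (⋃ R ∈ D.stoppingChildren α f Q, R.toSet) ≤ ENNReal.ofReal (1 / 2) * volume Q.toSet := by
  rw [← ENNReal.mul_le_mul_iff_right sparseConst_ne_zero sparseConst_ne_top, ← mul_assoc]
  exact (sparseConst_mul_volume_biUnion_stoppingChildren_le hd hα hQ).trans
    (mul_le_mul_left (ofReal_two_rpow_neg_le hd hα) _)

lemma exists_mem_stoppingChildren_superset (hd : 0 < d) {P Q : Cube d} (hQ : Q ∈ D.cubes)
    (hP : P ∈ D.cubes) (hPQ : P.toSet ⊂ Q.toSet)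
    (hbig : sparseConst d α * fracAverage α f Q < fracAverage α f P) :
    ∃ R ∈ D.stoppingChildren α f Q, P.toSet ⊆ R.toSet := by
  set y := P.corner
  set big : ℤ → Prop := fun k => (D.cubeAt k y).toSet ⊂ Q.toSet ∧
    sparseConst d α * fracAverage α f Q < fracAverage α f (D.cubeAt k y)
  have hbigP : big (D.level P) := by
    show _ ∧ _
    rw [← D.eq_cubeAt_level hP P.corner_mem_toSet]
    exact ⟨hPQ, hbig⟩
  -- the largest ancestor of `P` inside `Q` with a large average
  obtain ⟨k, ⟨hkQ, hkbig⟩, hkmin⟩ := Int.exists_least_of_bdd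
    ⟨D.level Q + 1, fun k hk => by
      simpa [level_cubeAt] using D.level_lt_of_ssubset hQ (D.cubeAt_mem_cubes k y) hk.1⟩
    ⟨_, hbigP⟩
  refine ⟨D.cubeAt k y, ⟨D.cubeAt_mem_cubes k y, hkQ, hkbig, ?_⟩, ?_⟩
  · intro P' hP' hkP' hP'Q hP'big
    have hP'y := D.eq_cubeAt_level hP' (hkP' (D.mem_cubeAt k y))
    have hle : D.level P' ≤ k := by
      simpa [level_cubeAt] using D.level_le_of_subset hd hP' (D.cubeAt_mem_cubes k y) hkP'
    have hge : k ≤ D.level P' := hkmin _ (by show _ ∧ _; rw [← hP'y]; exact ⟨hP'Q, hP'big⟩)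
    rw [hP'y, le_antisymm hle hge]
  · refine D.toSet_subset_of_level_le (D.cubeAt_mem_cubes k y) hP ?_
      ⟨y, P.corner_mem_toSet, D.mem_cubeAt k y⟩
    rw [level_cubeAt]
    exact hkmin _ hbigP

variable (D α f) in
def stoppingTree (T : Cube d) : ℕ → Set (Cube d)
  | 0 => {T}
  | n + 1 => ⋃ Q ∈ stoppingTree T n, D.stoppingChildren α f Q

variable (D α f) in
def stoppingFamily (a : Fin d → ℝ) (k : ℤ) : Set (Cube d) :=
  (⋃ n, D.stoppingTree α f (D.cubeAt k a) n) ∪ (fun j => D.cubeAt j a) '' Iio k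

variable {T : Cube d}

lemma mem_cubes_of_mem_stoppingTree (hT : T ∈ D.cubes) {n : ℕ} {Q : Cube d}
    (hQ : Q ∈ D.stoppingTree α f T n) : Q ∈ D.cubes := by
  cases n with
  | zero => exact (mem_singleton_iff.1 hQ) ▸ hT
  | succ n =>
    obtain ⟨P, -, hQP⟩ := mem_iUnion₂.1 hQ
    exact hQP.1

lemma toSet_subset_of_mem_stoppingTree {n : ℕ} {Q : Cube d} (hQ : Q ∈ D.stoppingTree α f T n) :
    Q.toSet ⊆ T.toSet := by
  induction n generalizing Q with
  | zero => rw [mem_singleton_iff.1 hQ]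
  | succ n ih =>
    obtain ⟨P, hP, hQP⟩ := mem_iUnion₂.1 hQ
    exact hQP.2.1.1.trans (ih hP)

lemma eq_of_mem_stoppingTree {n : ℕ} {Q Q' : Cube d} (hQ : Q ∈ D.stoppingTree α f T n)
    (hQ' : Q' ∈ D.stoppingTree α f T n) (h : (Q.toSet ∩ Q'.toSet).Nonempty) : Q = Q' := by
  induction n generalizing Q Q' with
  | zero => rw [mem_singleton_iff.1 hQ, mem_singleton_iff.1 hQ']
  | succ n ih =>
    obtain ⟨P, hP, hQP⟩ := mem_iUnion₂.1 hQ
    obtain ⟨P', hP', hQP'⟩ := mem_iUnion₂.1 hQ'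
    obtain rfl := ih hP hP' (h.mono (inter_subset_inter hQP.2.1.1 hQP'.2.1.1))
    exact (pairwiseDisjoint_stoppingChildren P).elim hQP hQP' (not_disjoint_iff_nonempty_inter.2 h)

lemma exists_mem_stoppingChildren_superset_of_mem_stoppingTree {n t : ℕ} {Q R : Cube d}
    (hQ : Q ∈ D.stoppingTree α f T n) (hR : R ∈ D.stoppingTree α f T (n + t + 1))
    (h : (R.toSet ∩ Q.toSet).Nonempty) :
    ∃ K ∈ D.stoppingChildren α f Q, R.toSet ⊆ K.toSet := by
  induction t generalizing R with
  | zero =>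
    obtain ⟨P, hP, hRP⟩ := mem_iUnion₂.1 hR
    obtain rfl := eq_of_mem_stoppingTree hP hQ (h.mono (inter_subset_inter_left _ hRP.2.1.1))
    exact ⟨R, hRP, subset_rfl⟩
  | succ t ih =>
    obtain ⟨P, hP, hRP⟩ := mem_iUnion₂.1 hR
    obtain ⟨K, hK, hPK⟩ := ih hP (h.mono (inter_subset_inter_left _ hRP.2.1.1))
    exact ⟨K, hK, hRP.2.1.1.trans hPK⟩

variable {a : Fin d → ℝ} {k : ℤ}

lemma stoppingFamily_subset_cubes : D.stoppingFamily α f a k ⊆ D.cubes := by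
  rintro Q (hQ | ⟨j, -, rfl⟩)
  · obtain ⟨n, hn⟩ := mem_iUnion.1 hQ
    exact mem_cubes_of_mem_stoppingTree (D.cubeAt_mem_cubes k a) hn
  · exact D.cubeAt_mem_cubes j a

lemma biUnion_ssubset_subset_of_mem_stoppingTree {n : ℕ} {Q : Cube d}
    (hQ : Q ∈ D.stoppingTree α f (D.cubeAt k a) n) :
    ⋃ R ∈ {R ∈ D.stoppingFamily α f a k | R.toSet ⊂ Q.toSet}, R.toSet ⊆
      ⋃ K ∈ D.stoppingChildren α f Q, K.toSet := by
  refine iUnion₂_subset fun R ⟨hR, hRQ⟩ => ?_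
  rcases hR with hR | ⟨j, hj, rfl⟩
  · obtain ⟨m, hm⟩ := mem_iUnion.1 hR
    have hmeet : (R.toSet ∩ Q.toSet).Nonempty :=
      ⟨R.corner, R.corner_mem_toSet, hRQ.1 R.corner_mem_toSet⟩
    rcases lt_trichotomy n m with hnm | rfl | hmn
    · obtain ⟨t, rfl⟩ := Nat.exists_eq_add_of_lt hnm
      obtain ⟨K, hK, hRK⟩ := exists_mem_stoppingChildren_superset_of_mem_stoppingTree hQ hm hmeet
      exact hRK.trans (subset_biUnion_of_mem hK)
    · exact absurd (eq_of_mem_stoppingTree hm hQ hmeet) (ne_of_apply_ne _ hRQ.ne)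
    · obtain ⟨t, rfl⟩ := Nat.exists_eq_add_of_lt hmn
      obtain ⟨K, hK, hQK⟩ := exists_mem_stoppingChildren_superset_of_mem_stoppingTree hm hQ
        (inter_comm R.toSet Q.toSet ▸ hmeet)
      exact absurd (hQK.trans hK.2.1.1) hRQ.not_subset
  · exact absurd ((toSet_subset_of_mem_stoppingTree hQ).trans (D.cubeAt_antitone a hj.le))
      hRQ.not_subset

lemma biUnion_ssubset_subset_cubeAt_succ {j : ℤ} (hj : j < k) :
    ⋃ R ∈ {R ∈ D.stoppingFamily α f a k | R.toSet ⊂ (D.cubeAt j a).toSet}, R.toSet ⊆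
      (D.cubeAt (j + 1) a).toSet := by
  refine iUnion₂_subset fun R ⟨hR, hRj⟩ => ?_
  rcases hR with hR | ⟨i, -, rfl⟩
  · obtain ⟨n, hn⟩ := mem_iUnion.1 hR
    exact (toSet_subset_of_mem_stoppingTree hn).trans (D.cubeAt_antitone a (by omega))
  · have := D.level_lt_of_ssubset (D.cubeAt_mem_cubes j a) (D.cubeAt_mem_cubes i a) hRj
    rw [level_cubeAt, level_cubeAt] at this
    exact D.cubeAt_antitone a (by omega)

lemma isSparseCubes_stoppingFamily (hd : 0 < d) (hα : 0 ≤ α) :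
    IsSparseCubes (1 / 2) (D.stoppingFamily α f a k) := by
  refine D.isSparseCubes_of_volume_biUnion_ssubset_le hd (by norm_num) (by norm_num)
    stoppingFamily_subset_cubes fun Q hQ => ?_
  rw [show (1 : ℝ) - 1 / 2 = 1 / 2 by norm_num]
  rcases hQ with hQ | ⟨j, hj, rfl⟩
  · obtain ⟨n, hn⟩ := mem_iUnion.1 hQ
    exact (measure_mono (biUnion_ssubset_subset_of_mem_stoppingTree hn)).trans
      (volume_biUnion_stoppingChildren_le hd hα
        (mem_cubes_of_mem_stoppingTree (D.cubeAt_mem_cubes k a) hn))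
  · have hvol := D.volume_le_of_level_lt (D.cubeAt_mem_cubes j a) (D.cubeAt_mem_cubes (j + 1) a)
      (by rw [level_cubeAt, level_cubeAt]; exact lt_add_one j)
    refine (measure_mono (biUnion_ssubset_subset_cubeAt_succ hj)).trans (hvol.trans ?_)
    gcongr
    rw [one_div]
    exact inv_anti₀ two_pos (le_self_pow₀ one_le_two hd.ne')

/-- Take `Q` the smallest stopping cube containing `P`: otherwise `P` would lie in a stopping
child of `Q`. -/
lemma exists_mem_stoppingTree_fracAverage_le (hd : 0 < d) (hαd : α ≤ d) (hT : T ∈ D.cubes)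
    {P : Cube d} (hP : P ∈ D.cubes) (hPT : P.toSet ⊆ T.toSet) :
    ∃ n, ∃ Q ∈ D.stoppingTree α f T n, P.toSet ⊆ Q.toSet ∧
      fracAverage α f P ≤ sparseConst d α * fracAverage α f Q := by
  obtain ⟨l, ⟨n, Q, hQ, hPQ, rfl⟩, hmax⟩ := Int.exists_greatest_of_bdd
    (P := fun l => ∃ n, ∃ Q ∈ D.stoppingTree α f T n, P.toSet ⊆ Q.toSet ∧ D.level Q = l)
    ⟨D.level P, fun l ⟨n, Q, hQ, hPQ, hl⟩ =>
      hl ▸ D.level_le_of_subset hd (mem_cubes_of_mem_stoppingTree hT hQ) hP hPQ⟩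
    ⟨D.level T, 0, T, mem_singleton T, hPT, rfl⟩
  refine ⟨n, Q, hQ, hPQ, not_lt.1 fun hbig => ?_⟩
  have hQc := mem_cubes_of_mem_stoppingTree hT hQ
  have hPQ' : P.toSet ⊂ Q.toSet := by
    refine hPQ.ssubset_of_ne ((Cube.toSet_injective hd).ne ?_)
    rintro rfl
    exact (le_mul_of_one_le_left zero_le (one_le_sparseConst hαd)).not_gt hbig
  obtain ⟨R, hR, hPR⟩ := exists_mem_stoppingChildren_superset hd hQc hP hPQ' hbig
  exact (D.level_lt_of_ssubset hQc hR.1 hR.2.1).not_ge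
    (hmax _ ⟨n + 1, R, mem_iUnion₂.2 ⟨Q, hQ, hR⟩, hPR, rfl⟩)

/-- A cube meeting `tsupport f ⊆ T` either lies in `T`, where the stopping tree controls it, or is
an ancestor of `T` and so belongs to the family. -/
lemma fracAverage_le_sparseConst_mul_sparseOp (hd : 0 < d) (hαd : α ≤ d)
    (hsupp : tsupport f ⊆ (D.cubeAt k a).toSet) {P : Cube d} (hP : P ∈ D.cubes)
    {x : Fin d → ℝ} (hx : x ∈ P.toSet) :
    fracAverage α f P ≤ sparseConst d α * sparseOp α (D.stoppingFamily α f a k) f x := by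
  have hT := D.cubeAt_mem_cubes k a
  rcases eq_or_ne (fracAverage α f P) 0 with h0 | h0
  · simp [h0]
  obtain ⟨z, hzP, hzf⟩ := inter_tsupport_nonempty_of_fracAverage_ne_zero h0
  by_cases hPT : P.toSet ⊆ (D.cubeAt k a).toSet
  · obtain ⟨n, Q, hQ, hPQ, hle⟩ := exists_mem_stoppingTree_fracAverage_le hd hαd hT hP hPT
    refine hle.trans ?_
    gcongr
    exact fracAverage_le_sparseOp (Or.inl (mem_iUnion.2 ⟨n, hQ⟩)) (hPQ hx)
  · have hTP : (D.cubeAt k a).toSet ⊂ P.toSet :=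
      ((D.toSet_subset_or_subset hT hP ⟨z, hzP, hsupp hzf⟩).resolve_left hPT).ssubset_of_not_subset
        hPT
    have hlt : D.level P < k := D.level_cubeAt k a ▸ D.level_lt_of_ssubset hP hT hTP
    have hPS : P ∈ D.stoppingFamily α f a k :=
      Or.inr ⟨D.level P, hlt, (D.eq_cubeAt_level hP (hTP.1 (D.mem_cubeAt k a))).symm⟩
    exact (fracAverage_le_sparseOp hPS hx).trans
      (le_mul_of_one_le_left zero_le (one_le_sparseConst hαd))

end Stopping

end DyadicLattice

theorem sparse_domination_dyadic_fractional_maximal_general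
    {d : ℕ} (D : DyadicLattice d)
    (honequad : ∀ x : Fin d → ℝ, D.quadrant x = Set.univ)
    (f : (Fin d → ℝ) → ℝ)
    (hsupp : HasCompactSupport f)
    (α : ℝ) (hα0 : 0 ≤ α) (hαd : α < d) :
    ∃ S : Set (Cube d), S ⊆ D.cubes ∧ IsSparseCubes (1 / 2) S ∧
      ∀ᵐ x ∂(volume : Measure (Fin d → ℝ)),
        MfracDyadic D α f x ≤
          ENNReal.ofReal ((2 : ℝ) ^ (1 - α / (d : ℝ))) * sparseOp α S f x := by
  have hd : 0 < d := by exact_mod_cast hα0.trans_lt hαd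
  obtain ⟨a, k, hk⟩ := D.exists_subset_cubeAt_of_isCompact honequad hsupp
  refine ⟨D.stoppingFamily α f a k, DyadicLattice.stoppingFamily_subset_cubes,
    D.isSparseCubes_stoppingFamily hd hα0, ae_of_all _ fun x => ?_⟩
  exact iSup₂_le fun P hP => iSup_le fun hx =>
    D.fracAverage_le_sparseConst_mul_sparseOp hd hαd.le hk hP hx

/-- pointwise sparse domination of the dyadic fractional maximal operator. -/
theorem sparse_domination_dyadic_fractional_maximal
    {d : ℕ} (hd : 0 < d) (D : DyadicLattice d)
    (honequad : ∀ x : Fin d → ℝ, D.quadrant x = Set.univ)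
    (f : (Fin d → ℝ) → ℝ) (hf : LocallyIntegrable f volume)
    (hsupp : HasCompactSupport f)
    (α : ℝ) (hα0 : 0 ≤ α) (hαd : α < d) :
    ∃ S : Set (Cube d), S ⊆ D.cubes ∧ IsSparseCubes (1 / 2) S ∧
      ∀ᵐ x ∂(volume : Measure (Fin d → ℝ)),
        MfracDyadic D α f x ≤
          ENNReal.ofReal ((2 : ℝ) ^ (1 - α / (d : ℝ))) * sparseOp α S f x :=
  sparse_domination_dyadic_fractional_maximal_general D honequad f hsupp α hα0 hαd
end

section
/- The transpose Hardy operator ℋᵗf, defined by ℋᵗf(x) = ∫_x^∞ f(t)/t dt for x > 0 and ℋᵗf(x) = −∫_{−∞}^x f(t)/t dt for x < 0, satisfies the pointwise sparse bound |ℋᵗf(x)| ≤ 2 Σ_{I∈S} χ_I(x) ⨍_I |f| for all x ≠ 0, where S = {[0, 2^k) : k ∈ ℤ} ∪ {[−2^k, 0) : k ∈ ℤ} is a 1/2-sparse family of intervals. -/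
open MeasureTheory ENNReal NNReal Set

/-!
Cover `(x, ∞)` by the upper halves `[2^(k-1), 2^k)` of those `I = [0, 2^k)` that contain `x`
(and symmetrically for `x < 0`). On such a half `1/|t| ≤ 2/|I|`, so the piece of `ℋᵗf(x)` it
carries is at most `2 ⨍_I |f|`. These halves are exactly the sets `G(I)` witnessing sparsity:
`G(I)` is the set of points of `I` whose double leaves `I`, which has measure at least `|I|/2`
because the points whose double stays in `I` form a copy of `I` scaled by `1/2`.
-/

noncomputable section

/-- The transpose Hardy operator:
`ℋᵗf(x) = ∫_x^∞ f(t)/t dt` for `x > 0` and `ℋᵗf(x) = −∫_{−∞}^x f(t)/t dt` for `x < 0`. -/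
def transposeHardy (f : ℝ → ℝ) (x : ℝ) : ℝ :=
  if 0 < x then ∫ t in Set.Ioi x, f t / t
  else -∫ t in Set.Iio x, f t / t

/-- An `η`-sparse collection of measurable subsets of `ℝ`. -/
def IsSparseSets (η : ℝ) (S : Set (Set ℝ)) : Prop :=
  ∃ G : Set ℝ → Set ℝ,
    (∀ I ∈ S, G I ⊆ I ∧ MeasurableSet (G I) ∧
      ENNReal.ofReal η * volume I ≤ volume (G I)) ∧
    S.PairwiseDisjoint G

def outerHalf (I : Set ℝ) : Set ℝ :=
  I \ (fun y => 2 * y) ⁻¹' I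

lemma MeasurableSet.outerHalf {I : Set ℝ} (hI : MeasurableSet I) : MeasurableSet (outerHalf I) :=
  hI.diff (hI.preimage (by fun_prop))

lemma half_mul_volume_le_volume_outerHalf {I : Set ℝ} (hI : volume I ≠ ∞) :
    ENNReal.ofReal (1 / 2) * volume I ≤ volume (outerHalf I) :=
  calc ENNReal.ofReal (1 / 2) * volume I = volume I - volume I / 2 := by
        rw [ENNReal.sub_half hI, ENNReal.div_eq_inv_mul, one_div, ENNReal.ofReal_inv_of_pos two_pos,
          ENNReal.ofReal_ofNat]
    _ = volume I - volume ((fun y => 2 * y) ⁻¹' I) := by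
        rw [Real.volume_preimage_mul_left two_ne_zero, ENNReal.div_eq_inv_mul, abs_inv, abs_two,
          ENNReal.ofReal_inv_of_pos two_pos, ENNReal.ofReal_ofNat]
    _ ≤ volume (outerHalf I) := le_measure_sdiff

lemma disjoint_outerHalf_of_subset_preimage {I J : Set ℝ} (h : I ⊆ (fun y => 2 * y) ⁻¹' J) :
    Disjoint (outerHalf I) (outerHalf J) :=
  disjoint_left.2 fun _ ⟨htI, _⟩ ⟨_, htJ⟩ => htJ (h htI)

lemma outerHalf_Ico_zero (a : ℝ) : outerHalf (Ico 0 a) = Ico (a / 2) a := by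
  ext t
  simp only [outerHalf, mem_sdiff, mem_preimage, mem_Ico, not_and, not_lt]
  constructor
  · rintro ⟨⟨_, hta⟩, h⟩
    exact ⟨by linarith [h (by linarith)], hta⟩
  · rintro ⟨hat, hta⟩
    exact ⟨⟨by linarith, hta⟩, fun _ => by linarith⟩

lemma outerHalf_Ico_neg_zero (a : ℝ) : outerHalf (Ico (-a) 0) = Ico (-a) (-(a / 2)) := by
  ext t
  simp only [outerHalf, mem_sdiff, mem_preimage, mem_Ico, not_and, not_lt]
  constructor
  · rintro ⟨⟨hat, ht0⟩, h⟩
    by_cases h2t : -a ≤ 2 * t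
    · linarith [h h2t]
    · exact ⟨hat, by linarith⟩
  · rintro ⟨hat, hta⟩
    exact ⟨⟨hat, by linarith⟩, fun _ => by linarith⟩

lemma two_mul_zpow_le_zpow {k l : ℤ} (h : k < l) : 2 * (2 : ℝ) ^ k ≤ 2 ^ l := by
  rw [mul_comm, ← zpow_add_one₀ two_ne_zero]
  exact zpow_le_zpow_right₀ one_le_two h

lemma isSparseSets_dyadic :
    IsSparseSets (1 / 2)
      ({I | ∃ k : ℤ, I = Ico (0 : ℝ) (2 ^ k)} ∪ {I | ∃ k : ℤ, I = Ico (-(2 : ℝ) ^ k) 0}) := by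
  have hpos : Pairwise (Function.onFun Disjoint fun k : ℤ => outerHalf (Ico 0 ((2 : ℝ) ^ k))) :=
    (pairwise_disjoint_on _).2 fun k l hkl =>
      disjoint_outerHalf_of_subset_preimage fun t ⟨ht0, htk⟩ =>
        ⟨by linarith, by linarith [two_mul_zpow_le_zpow hkl]⟩
  have hneg : Pairwise (Function.onFun Disjoint fun k : ℤ => outerHalf (Ico (-(2 : ℝ) ^ k) 0)) :=
    (pairwise_disjoint_on _).2 fun k l hkl =>
      disjoint_outerHalf_of_subset_preimage fun t ⟨htk, ht0⟩ =>
        ⟨by linarith [two_mul_zpow_le_zpow hkl], by linarith⟩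
  have hsign (a b : ℝ) : Disjoint (outerHalf (Ico 0 a)) (outerHalf (Ico (-b) 0)) :=
    Ico_disjoint_Ico_same.symm.mono sdiff_subset sdiff_subset
  refine ⟨outerHalf, ?_, ?_⟩
  · rintro I (⟨k, rfl⟩ | ⟨k, rfl⟩) <;>
      exact ⟨sdiff_subset, measurableSet_Ico.outerHalf,
        half_mul_volume_le_volume_outerHalf measure_Ico_lt_top.ne⟩
  · rintro I (⟨k, rfl⟩ | ⟨k, rfl⟩) J (⟨l, rfl⟩ | ⟨l, rfl⟩) hIJ
    · exact hpos fun h => hIJ (h ▸ rfl)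
    · exact hsign _ _
    · exact (hsign _ _).symm
    · exact hneg fun h => hIJ (h ▸ rfl)

lemma setLIntegral_enorm_div_le {s : Set ℝ} {c : ℝ} (hs : MeasurableSet s) (hc : 0 < c)
    (hcs : ∀ t ∈ s, c ≤ |t|) (f : ℝ → ℝ) :
    ∫⁻ t in s, ‖f t / t‖ₑ ≤ ENNReal.ofReal c⁻¹ * ∫⁻ t in s, ‖f t‖ₑ := by
  rw [← lintegral_const_mul' _ _ ofReal_ne_top]
  refine setLIntegral_mono' hs fun t ht => ?_
  simp only [Real.enorm_eq_ofReal_abs]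
  rw [← ENNReal.ofReal_mul (by positivity), abs_div, div_eq_inv_mul]
  exact ENNReal.ofReal_le_ofReal
    (mul_le_mul_of_nonneg_right (inv_anti₀ hc (hcs t ht)) (abs_nonneg _))

lemma setLIntegral_outerHalf_enorm_div_le {I : Set ℝ} {a : ℝ} (hI : MeasurableSet I) (ha : 0 < a)
    (hvol : volume I = ENNReal.ofReal a) (habs : ∀ t ∈ outerHalf I, a / 2 ≤ |t|) (f : ℝ → ℝ) :
    ∫⁻ t in outerHalf I, ‖f t / t‖ₑ ≤ 2 * ((volume I)⁻¹ * ∫⁻ t in I, ‖f t‖ₑ) :=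
  calc ∫⁻ t in outerHalf I, ‖f t / t‖ₑ
      ≤ ENNReal.ofReal (a / 2)⁻¹ * ∫⁻ t in outerHalf I, ‖f t‖ₑ :=
        setLIntegral_enorm_div_le hI.outerHalf (by positivity) habs f
    _ ≤ ENNReal.ofReal (a / 2)⁻¹ * ∫⁻ t in I, ‖f t‖ₑ := by
        gcongr
        exact sdiff_subset
    _ = 2 * ((volume I)⁻¹ * ∫⁻ t in I, ‖f t‖ₑ) := by
        rw [← mul_assoc, hvol, inv_div, ENNReal.ofReal_div_of_pos ha, ENNReal.ofReal_ofNat,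
          div_eq_mul_inv]

lemma setLIntegral_outerHalf_Ico_zero_enorm_div_le {a : ℝ} (ha : 0 < a) (f : ℝ → ℝ) :
    ∫⁻ t in outerHalf (Ico 0 a), ‖f t / t‖ₑ ≤
      2 * ((volume (Ico 0 a))⁻¹ * ∫⁻ t in Ico 0 a, ‖f t‖ₑ) := by
  refine setLIntegral_outerHalf_enorm_div_le measurableSet_Ico ha (by simp) (fun t ht => ?_) f
  rw [outerHalf_Ico_zero] at ht
  rw [abs_of_pos (by linarith [ht.1])]
  exact ht.1

lemma setLIntegral_outerHalf_Ico_neg_zero_enorm_div_le {a : ℝ} (ha : 0 < a) (f : ℝ → ℝ) :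
    ∫⁻ t in outerHalf (Ico (-a) 0), ‖f t / t‖ₑ ≤
      2 * ((volume (Ico (-a) 0))⁻¹ * ∫⁻ t in Ico (-a) 0, ‖f t‖ₑ) := by
  refine setLIntegral_outerHalf_enorm_div_le measurableSet_Ico ha (by simp) (fun t ht => ?_) f
  rw [outerHalf_Ico_neg_zero] at ht
  rw [abs_of_neg (by linarith [ht.2])]
  linarith [ht.2]

lemma lintegral_enorm_div_le_two_mul_tsum_indicator {ι : Type*} [Countable ι] {I : ι → Set ℝ}
    {s : Set ℝ} {x : ℝ} (f : ℝ → ℝ) (hcover : s ⊆ ⋃ k, ⋃ (_ : x ∈ I k), outerHalf (I k))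
    (hpiece : ∀ k, ∫⁻ t in outerHalf (I k), ‖f t / t‖ₑ ≤
      2 * ((volume (I k))⁻¹ * ∫⁻ t in I k, ‖f t‖ₑ)) :
    ∫⁻ t in s, ‖f t / t‖ₑ ≤
      2 * ∑' k, (I k).indicator (fun _ => (volume (I k))⁻¹ * ∫⁻ t in I k, ‖f t‖ₑ) x :=
  calc ∫⁻ t in s, ‖f t / t‖ₑ
      ≤ ∑' k, ∫⁻ t in ⋃ (_ : x ∈ I k), outerHalf (I k), ‖f t / t‖ₑ :=
        (lintegral_mono_set hcover).trans (lintegral_iUnion_le _ _)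
    _ ≤ ∑' k, 2 * (I k).indicator (fun _ => (volume (I k))⁻¹ * ∫⁻ t in I k, ‖f t‖ₑ) x := by
        refine ENNReal.tsum_le_tsum fun k => ?_
        by_cases hx : x ∈ I k
        · simpa [hx] using hpiece k
        · simp [hx]
    _ = _ := ENNReal.tsum_mul_left

lemma Ioi_subset_iUnion_outerHalf {x : ℝ} (hx : 0 ≤ x) :
    Ioi x ⊆ ⋃ k : ℤ, ⋃ (_ : x ∈ Ico 0 ((2 : ℝ) ^ k)), outerHalf (Ico 0 ((2 : ℝ) ^ k)) := by
  intro t (hxt : x < t)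
  obtain ⟨n, hn, hn'⟩ := _root_.exists_mem_Ico_zpow (hx.trans_lt hxt) one_lt_two
  refine mem_iUnion₂.2 ⟨n + 1, ⟨hx, hxt.trans hn'⟩, ?_⟩
  rw [outerHalf_Ico_zero, zpow_add_one₀ two_ne_zero, mul_div_cancel_right₀ _ two_ne_zero]
  rw [zpow_add_one₀ two_ne_zero] at hn'
  exact ⟨hn, hn'⟩

lemma Iio_subset_iUnion_outerHalf {x : ℝ} (hx : x < 0) :
    Iio x ⊆ ⋃ k : ℤ, ⋃ (_ : x ∈ Ico (-(2 : ℝ) ^ k) 0), outerHalf (Ico (-(2 : ℝ) ^ k) 0) := by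
  intro t (htx : t < x)
  obtain ⟨n, hn, hn'⟩ := _root_.exists_mem_Ioc_zpow (neg_pos.2 (htx.trans hx)) one_lt_two
  refine mem_iUnion₂.2 ⟨n + 1, ⟨by linarith, hx⟩, ?_⟩
  rw [outerHalf_Ico_neg_zero, zpow_add_one₀ two_ne_zero, mul_div_cancel_right₀ _ two_ne_zero]
  rw [zpow_add_one₀ two_ne_zero] at hn'
  exact ⟨by linarith, by linarith⟩

lemma ofReal_abs_integral_le {α : Type*} [MeasurableSpace α] {μ : Measure α} (g : α → ℝ) :
    ENNReal.ofReal |∫ t, g t ∂μ| ≤ ∫⁻ t, ‖g t‖ₑ ∂μ := by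
  rw [← Real.enorm_eq_ofReal_abs]
  exact enorm_integral_le_lintegral_enorm g

theorem sparse_bound_transpose_hardy_general
    (f : ℝ → ℝ) :
    IsSparseSets (1 / 2)
      ({I | ∃ k : ℤ, I = Set.Ico (0 : ℝ) (2 ^ k)} ∪
        {I | ∃ k : ℤ, I = Set.Ico (-(2 : ℝ) ^ k) 0}) ∧
    ∀ x : ℝ, x ≠ 0 →
      ENNReal.ofReal |transposeHardy f x| ≤
        2 * ∑' k : ℤ,
          ((Set.Ico (0 : ℝ) (2 ^ k)).indicator
              (fun _ => (volume (Set.Ico (0 : ℝ) ((2 : ℝ) ^ k)))⁻¹ *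
                ∫⁻ t in Set.Ico (0 : ℝ) ((2 : ℝ) ^ k), (‖f t‖₊ : ℝ≥0∞)) x +
            (Set.Ico (-(2 : ℝ) ^ k) 0).indicator
              (fun _ => (volume (Set.Ico (-(2 : ℝ) ^ k) (0 : ℝ)))⁻¹ *
                ∫⁻ t in Set.Ico (-(2 : ℝ) ^ k) (0 : ℝ), (‖f t‖₊ : ℝ≥0∞)) x) := by
  refine ⟨isSparseSets_dyadic, fun x hx => ?_⟩
  rcases hx.lt_or_gt with hneg | hpos
  · calc ENNReal.ofReal |transposeHardy f x| = ENNReal.ofReal |∫ t in Iio x, f t / t| := by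
          rw [transposeHardy, if_neg hneg.not_gt, abs_neg]
      _ ≤ ∫⁻ t in Iio x, ‖f t / t‖ₑ := ofReal_abs_integral_le _
      _ ≤ _ := lintegral_enorm_div_le_two_mul_tsum_indicator f (Iio_subset_iUnion_outerHalf hneg)
          fun k => setLIntegral_outerHalf_Ico_neg_zero_enorm_div_le (zpow_pos two_pos k) f
      _ ≤ _ := by gcongr; exact le_add_self
  · calc ENNReal.ofReal |transposeHardy f x| = ENNReal.ofReal |∫ t in Ioi x, f t / t| := by
          rw [transposeHardy, if_pos hpos]
      _ ≤ ∫⁻ t in Ioi x, ‖f t / t‖ₑ := ofReal_abs_integral_le _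
      _ ≤ _ := lintegral_enorm_div_le_two_mul_tsum_indicator f (Ioi_subset_iUnion_outerHalf hpos.le)
          fun k => setLIntegral_outerHalf_Ico_zero_enorm_div_le (zpow_pos two_pos k) f
      _ ≤ _ := by gcongr; exact le_self_add

/-- pointwise sparse bound for the transpose Hardy operator, with the
`1/2`-sparse family `S = {[0, 2^k) : k ∈ ℤ} ∪ {[−2^k, 0) : k ∈ ℤ}`. -/
theorem sparse_bound_transpose_hardy
    (f : ℝ → ℝ) (hf : LocallyIntegrable f volume)
    (h1 : ∀ x : ℝ, 0 < x → IntegrableOn (fun t => f t / t) (Set.Ioi x))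
    (h2 : ∀ x : ℝ, x < 0 → IntegrableOn (fun t => f t / t) (Set.Iio x)) :
    IsSparseSets (1 / 2)
      ({I | ∃ k : ℤ, I = Set.Ico (0 : ℝ) (2 ^ k)} ∪
        {I | ∃ k : ℤ, I = Set.Ico (-(2 : ℝ) ^ k) 0}) ∧
    ∀ x : ℝ, x ≠ 0 →
      ENNReal.ofReal |transposeHardy f x| ≤
        2 * ∑' k : ℤ,
          ((Set.Ico (0 : ℝ) (2 ^ k)).indicator
              (fun _ => (volume (Set.Ico (0 : ℝ) ((2 : ℝ) ^ k)))⁻¹ *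
                ∫⁻ t in Set.Ico (0 : ℝ) ((2 : ℝ) ^ k), (‖f t‖₊ : ℝ≥0∞)) x +
            (Set.Ico (-(2 : ℝ) ^ k) 0).indicator
              (fun _ => (volume (Set.Ico (-(2 : ℝ) ^ k) (0 : ℝ)))⁻¹ *
                ∫⁻ t in Set.Ico (-(2 : ℝ) ^ k) (0 : ℝ), (‖f t‖₊ : ℝ≥0∞)) x) :=
  sparse_bound_transpose_hardy_general f

end
end
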